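/- arXiv:2405.13703 — 9 statements merged into one kernel-verified Lean document; each statement's English description precedes it below -/
import Mathlib

section
/- Consider real sequences δ(s), θ(s) (s = 0, 1, 2, …) evolving according to δ(s+1) = θ(s)·δ(s) and θ(s+1) = θ(s) + c·(1−θ(s))·θ(s)·δ(s), with parameter c ∈ [0,1], initial conditions δ(0) ∈ [0, 1/2] and θ(0) ∈ [0, 1). If c·δ(0) + θ(0) < 1, then δ(s) → 0 as s → ∞ (the two agents reach consensus). -/
/-- Two-agent stubbornness-feedback dynamics: if `c·δ(0) + θ(0) < 1` then `δ(s) → 0`. -/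
theorem two_agent_consensus
    (c : ℝ) (hc : c ∈ Set.Icc (0:ℝ) 1)
    (δ θ : ℕ → ℝ)
    (hδ0 : δ 0 ∈ Set.Icc (0:ℝ) (1/2))
    (hθ0 : θ 0 ∈ Set.Ico (0:ℝ) 1)
    (hδ : ∀ s, δ (s+1) = θ s * δ s)
    (hθ : ∀ s, θ (s+1) = θ s + c * (1 - θ s) * θ s * δ s)
    (hcond : c * δ 0 + θ 0 < 1) :
    Filter.Tendsto δ Filter.atTop (nhds 0) := by
  obtain ⟨hc0, hc1⟩ := hc
  obtain ⟨hd0, hd1⟩ := hδ0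
  obtain ⟨ht0, ht1⟩ := hθ0
  set K : ℝ := c * δ 0 + θ 0 with hK
  have hK0 : 0 ≤ K := by positivity
  -- invariant
  have inv : ∀ s, 0 ≤ δ s ∧ δ s ≤ 1/2 ∧ 0 ≤ θ s ∧ θ s < 1 ∧ c * δ s + θ s ≤ K := by
    intro s
    induction s with
    | zero => exact ⟨hd0, hd1, ht0, ht1, le_refl _⟩
    | succ n ih =>
      obtain ⟨h1, h2, h3, h4, h5⟩ := ih
      refine ⟨by rw [hδ n]; positivity, ?_, ?_, ?_, ?_⟩
      · rw [hδ n]; nlinarith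
      · rw [hθ n]
        nlinarith [mul_nonneg (mul_nonneg (mul_nonneg hc0 (by linarith : (0:ℝ) ≤ 1 - θ n)) h3) h1]
      · rw [hθ n]
        have h6 : (1 - θ n) * θ n * δ n ≥ 0 := mul_nonneg (mul_nonneg (by linarith) h3) h1
        have h7 : c * ((1 - θ n) * θ n * δ n) ≤ (1 - θ n) * θ n * δ n := by nlinarith
        nlinarith [mul_nonneg h3 h1, mul_nonneg (mul_nonneg h3 h3) h1]
      · rw [hδ n, hθ n]
        nlinarith [mul_nonneg (mul_nonneg hc0 h1) (sq_nonneg (1 - θ n))]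
  -- geometric bound
  have hbound : ∀ s, δ s ≤ K ^ s * δ 0 := by
    intro s
    induction s with
    | zero => simp
    | succ n ih =>
      obtain ⟨h1, h2, h3, h4, h5⟩ := inv n
      have hθK : θ n ≤ K := by nlinarith
      calc δ (n+1) = θ n * δ n := hδ n
        _ ≤ K * (K ^ n * δ 0) := by
            apply mul_le_mul hθK ih h1 hK0
        _ = K ^ (n+1) * δ 0 := by ring
  have hgeo : Filter.Tendsto (fun s => K ^ s * δ 0) Filter.atTop (nhds 0) := by
    have := (tendsto_pow_atTop_nhds_zero_of_lt_one hK0 hcond).mul_const (δ 0)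
    simpa using this
  refine squeeze_zero (fun s => (inv s).1) hbound hgeo
end

section
/- Consider real sequences δ(s), θ(s) (s = 0, 1, 2, …) evolving according to δ(s+1) = θ(s)·δ(s) and θ(s+1) = θ(s) + c·(1−θ(s))·θ(s)·δ(s), with parameter c ∈ [0,1], initial conditions δ(0) ∈ [0, 1] and θ(0) ∈ [0, 1). If c·δ(0) + θ(0) < 1, then δ(s) → 0 as s → ∞. (Extension of the two-agent consensus condition to the full distance range δ ∈ [0,1], as arises in the one-versus-all configuration.) -/
/-- One-versus-all extension: on the extended domain `δ(0) ∈ [0,1]`,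
if `c·δ(0) + θ(0) < 1` then `δ(s) → 0`. -/
theorem one_vs_all_consensus
    (c : ℝ) (hc : c ∈ Set.Icc (0:ℝ) 1)
    (δ θ : ℕ → ℝ)
    (hδ0 : δ 0 ∈ Set.Icc (0:ℝ) 1)
    (hθ0 : θ 0 ∈ Set.Ico (0:ℝ) 1)
    (hδ : ∀ s, δ (s+1) = θ s * δ s)
    (hθ : ∀ s, θ (s+1) = θ s + c * (1 - θ s) * θ s * δ s)
    (hcond : c * δ 0 + θ 0 < 1) :
    Filter.Tendsto δ Filter.atTop (nhds 0) := by
  obtain ⟨hc0, hc1⟩ := hc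
  obtain ⟨hd0, hd1⟩ := hδ0
  obtain ⟨ht0, ht1⟩ := hθ0
  set q : ℝ := c * δ 0 + θ 0 with hq
  have hq0 : 0 ≤ q := by positivity
  have hq1 : q < 1 := hcond
  -- invariants
  have inv : ∀ s, 0 ≤ δ s ∧ δ s ≤ 1 ∧ 0 ≤ θ s ∧ θ s < 1 ∧ c * δ s + θ s ≤ q := by
    intro s
    induction s with
    | zero => exact ⟨hd0, hd1, ht0, ht1, le_refl _⟩
    | succ n ih =>
      obtain ⟨h1, h2, h3, h4, h5⟩ := ih
      refine ⟨?_, ?_, ?_, ?_, ?_⟩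
      · rw [hδ n]; positivity
      · rw [hδ n]; nlinarith
      · rw [hθ n]; nlinarith [mul_nonneg (mul_nonneg (mul_nonneg hc0 (by linarith : (0:ℝ) ≤ 1 - θ n)) h3) h1]
      · rw [hθ n]; nlinarith [mul_nonneg h1 h3, mul_nonneg hc0 (mul_nonneg h3 h1)]
      · rw [hδ n, hθ n]; nlinarith [mul_nonneg (mul_nonneg hc0 h1) (sq_nonneg (1 - θ n))]
  -- δ s ≤ q ^ s
  have hbound : ∀ s, δ s ≤ q ^ s := by
    intro s
    induction s with
    | zero => simpa using hd1
    | succ n ih =>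
      obtain ⟨h1, h2, h3, h4, h5⟩ := inv n
      have hθq : θ n ≤ q := by nlinarith
      calc δ (n + 1) = θ n * δ n := hδ n
        _ ≤ q * q ^ n := by
            have := pow_nonneg hq0 n
            nlinarith
        _ = q ^ (n + 1) := (pow_succ' q n).symm
  have h0 : Filter.Tendsto (fun _ : ℕ => (0:ℝ)) Filter.atTop (nhds 0) := tendsto_const_nhds
  have hg : Filter.Tendsto (fun s : ℕ => q ^ s) Filter.atTop (nhds 0) :=
    tendsto_pow_atTop_nhds_zero_of_lt_one hq0 hq1
  exact tendsto_of_tendsto_of_tendsto_of_le_of_le h0 hg (fun s => (inv s).1) hbound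
end

section
/- Let a, c be real numbers with 0 ≤ c ≤ a. For any real sequences δ(s), θ(s) satisfying δ(s+1) = θ(s)·δ(s) and θ(s+1) = θ(s) + c·(1−θ(s))·θ(s)·δ(s), with δ(s) ≥ 0 and θ(s) ∈ [0,1] for all s, the Lyapunov function V(δ, θ) = a·δ + θ is nonincreasing along trajectories: a·δ(s+1) + θ(s+1) ≤ a·δ(s) + θ(s) for all s. -/
/-- The Lyapunov function `V(δ,θ) = a·δ + θ` is nonincreasing along trajectories
of the stubbornness-feedback dynamics when `0 ≤ c ≤ a`. -/
theorem lyapunov_nonincreasing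
    (a c : ℝ) (hc0 : 0 ≤ c) (hca : c ≤ a)
    (δ θ : ℕ → ℝ)
    (hδrec : ∀ s, δ (s+1) = θ s * δ s)
    (hθrec : ∀ s, θ (s+1) = θ s + c * (1 - θ s) * θ s * δ s)
    (hδpos : ∀ s, 0 ≤ δ s)
    (hθmem : ∀ s, θ s ∈ Set.Icc (0:ℝ) 1) :
    ∀ s, a * δ (s+1) + θ (s+1) ≤ a * δ s + θ s := by
  intro s
  obtain ⟨h0, h1⟩ := hθmem s
  have hd := hδpos s
  rw [hδrec, hθrec]
  have hac : 0 ≤ a - c * θ s := by nlinarith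
  have key : 0 ≤ (1 - θ s) * δ s * (a - c * θ s) :=
    mul_nonneg (mul_nonneg (by linarith) hd) hac
  nlinarith [key]
end

section
/- Let c ∈ [0,1] and let δ(s), θ(s) satisfy δ(s+1) = θ(s)·δ(s) and θ(s+1) = θ(s) + c·(1−θ(s))·θ(s)·δ(s), with δ(0) ∈ [0,1] and θ(0) ∈ [0,1]. Then the limits δ* = lim_{s→∞} δ(s) and θ* = lim_{s→∞} θ(s) exist, and they satisfy δ*·(1 − θ*) = 0; that is, every trajectory converges either to consensus (δ* = 0) or to full stubbornness (θ* = 1). -/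
/-- Every trajectory of the stubbornness-feedback dynamics converges, and the
limits satisfy `δ*·(1−θ*) = 0`: either consensus (`δ* = 0`) or full
stubbornness (`θ* = 1`). -/
theorem trajectory_dichotomy
    (c : ℝ) (hc : c ∈ Set.Icc (0:ℝ) 1)
    (δ θ : ℕ → ℝ)
    (hδ0 : δ 0 ∈ Set.Icc (0:ℝ) 1) (hθ0 : θ 0 ∈ Set.Icc (0:ℝ) 1)
    (hδrec : ∀ s, δ (s+1) = θ s * δ s)
    (hθrec : ∀ s, θ (s+1) = θ s + c * (1 - θ s) * θ s * δ s) :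
    ∃ δstar θstar : ℝ,
      Filter.Tendsto δ Filter.atTop (nhds δstar) ∧
      Filter.Tendsto θ Filter.atTop (nhds θstar) ∧
      δstar * (1 - θstar) = 0 := by
  obtain ⟨hc0, hc1⟩ := hc
  have bounds : ∀ s, 0 ≤ δ s ∧ δ s ≤ 1 ∧ 0 ≤ θ s ∧ θ s ≤ 1 := by
    intro s
    induction s with
    | zero => exact ⟨hδ0.1, hδ0.2, hθ0.1, hθ0.2⟩
    | succ n ih =>
      obtain ⟨h1, h2, h3, h4⟩ := ih
      refine ⟨?_, ?_, ?_, ?_⟩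
      · rw [hδrec]; positivity
      · rw [hδrec]; nlinarith
      · rw [hθrec]
        nlinarith [mul_nonneg (mul_nonneg (mul_nonneg hc0 (by linarith : (0:ℝ) ≤ 1 - θ n)) h3) h1]
      · rw [hθrec]
        nlinarith [mul_nonneg (by linarith : (0:ℝ) ≤ 1 - θ n) (by nlinarith [mul_nonneg h3 h1, mul_le_one₀ h4 h1 h2] : (0:ℝ) ≤ 1 - c * θ n * δ n)]
  have hanti : Antitone δ := by
    apply antitone_nat_of_succ_le
    intro n
    rw [hδrec]
    nlinarith [bounds n]
  have hmono : Monotone θ := by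
    apply monotone_nat_of_le_succ
    intro n
    obtain ⟨h1, h2, h3, h4⟩ := bounds n
    rw [hθrec]
    nlinarith [mul_nonneg (mul_nonneg (mul_nonneg hc0 (by linarith : (0:ℝ) ≤ 1 - θ n)) h3) h1]
  have hδlim : Filter.Tendsto δ Filter.atTop (nhds (⨅ n, δ n)) := by
    apply tendsto_atTop_ciInf hanti
    exact ⟨0, fun x ⟨n, hn⟩ => hn ▸ (bounds n).1⟩
  have hθlim : Filter.Tendsto θ Filter.atTop (nhds (⨆ n, θ n)) := by
    apply tendsto_atTop_ciSup hmono
    exact ⟨1, fun x ⟨n, hn⟩ => hn ▸ (bounds n).2.2.2⟩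
  set a := ⨅ n, δ n
  set b := ⨆ n, θ n
  refine ⟨a, b, hδlim, hθlim, ?_⟩
  have h1 : Filter.Tendsto (fun s => δ (s + 1)) Filter.atTop (nhds a) :=
    hδlim.comp (Filter.tendsto_add_atTop_nat 1)
  have h2 : Filter.Tendsto (fun s => θ s * δ s) Filter.atTop (nhds (b * a)) :=
    hθlim.mul hδlim
  have h3 : a = b * a := by
    apply tendsto_nhds_unique h1
    simpa only [hδrec] using h2
  nlinarith
end

section
/- Let c ∈ [0,1] and let δ(s), θ(s) satisfy δ(s+1) = θ(s)·δ(s) and θ(s+1) = θ(s) + c·(1−θ(s))·θ(s)·δ(s), with δ(0) ∈ [0,1], θ(0) ∈ [0,1), and c·δ(0) + θ(0) < 1. Then the stubbornness is uniformly bounded away from 1: θ(s) ≤ c·δ(0) + θ(0) < 1 for all s ≥ 0. -/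
/-- Under the consensus condition, stubbornness stays uniformly bounded away
from 1: `θ(s) ≤ c·δ(0) + θ(0) < 1` for all `s`. -/
theorem stubbornness_uniform_bound
    (c : ℝ) (hc : c ∈ Set.Icc (0:ℝ) 1)
    (δ θ : ℕ → ℝ)
    (hδ0 : δ 0 ∈ Set.Icc (0:ℝ) 1) (hθ0 : θ 0 ∈ Set.Ico (0:ℝ) 1)
    (hδrec : ∀ s, δ (s+1) = θ s * δ s)
    (hθrec : ∀ s, θ (s+1) = θ s + c * (1 - θ s) * θ s * δ s)
    (hcond : c * δ 0 + θ 0 < 1) :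
    ∀ s, θ s ≤ c * δ 0 + θ 0 := by
  obtain ⟨hc0, hc1⟩ := hc
  obtain ⟨hd0, hd1⟩ := hδ0
  obtain ⟨ht0, ht1⟩ := hθ0
  have key : ∀ s, 0 ≤ δ s ∧ δ s ≤ 1 ∧ 0 ≤ θ s ∧
      c * δ s + θ s ≤ c * δ 0 + θ 0 := by
    intro s
    induction s with
    | zero => exact ⟨hd0, hd1, ht0, le_refl _⟩
    | succ n ih =>
      obtain ⟨h1, h2, h3, h4⟩ := ih
      have hθn1 : θ n < 1 := by nlinarith
      refine ⟨?_, ?_, ?_, ?_⟩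
      · rw [hδrec]; positivity
      · rw [hδrec]; nlinarith
      · rw [hθrec]; nlinarith [mul_nonneg (mul_nonneg (mul_nonneg hc0 (by linarith : (0:ℝ) ≤ 1 - θ n)) h3) h1]
      · rw [hδrec, hθrec]; nlinarith [mul_nonneg hc0 h1, sq_nonneg (1 - θ n),
          mul_nonneg (mul_nonneg hc0 h1) (sq_nonneg (1 - θ n))]
  intro s
  obtain ⟨h1, _, _, h4⟩ := key s
  nlinarith
end

section
/- Let c ∈ [0,1] and let δ(s), θ(s) satisfy δ(s+1) = θ(s)·δ(s) and θ(s+1) = θ(s) + c·(1−θ(s))·θ(s)·δ(s), with δ(0) ∈ [0,1], θ(0) ∈ [0,1), and c·δ(0) + θ(0) < 1. Then the distance decays at least geometrically: δ(s) ≤ (c·δ(0) + θ(0))^s · δ(0) for all s ≥ 0. -/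
/-- Under the consensus condition, the distance decays at least geometrically:
`δ(s) ≤ (c·δ(0) + θ(0))^s · δ(0)`. -/
theorem geometric_decay
    (c : ℝ) (hc : c ∈ Set.Icc (0:ℝ) 1)
    (δ θ : ℕ → ℝ)
    (hδ0 : δ 0 ∈ Set.Icc (0:ℝ) 1) (hθ0 : θ 0 ∈ Set.Ico (0:ℝ) 1)
    (hδrec : ∀ s, δ (s+1) = θ s * δ s)
    (hθrec : ∀ s, θ (s+1) = θ s + c * (1 - θ s) * θ s * δ s)
    (hcond : c * δ 0 + θ 0 < 1) :
    ∀ s, δ s ≤ (c * δ 0 + θ 0) ^ s * δ 0 := by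
  obtain ⟨hc0, hc1⟩ := hc
  obtain ⟨hδ00, hδ01⟩ := hδ0
  obtain ⟨hθ00, hθ01⟩ := hθ0
  set q : ℝ := c * δ 0 + θ 0 with hq
  have hq0 : 0 ≤ q := by positivity
  -- invariant
  have inv : ∀ s, 0 ≤ δ s ∧ 0 ≤ θ s ∧ θ s + c * δ s ≤ q := by
    intro s
    induction s with
    | zero => exact ⟨hδ00, hθ00, by rw [hq]; linarith⟩
    | succ n ih =>
      obtain ⟨hdn, htn0, hsum⟩ := ih
      have htn1 : θ n ≤ 1 := by nlinarith
      refine ⟨?_, ?_, ?_⟩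
      · rw [hδrec]; positivity
      · rw [hθrec]; have : 0 ≤ c * (1 - θ n) * θ n * δ n :=
          mul_nonneg (mul_nonneg (mul_nonneg hc0 (by linarith)) htn0) hdn
        linarith
      · rw [hθrec, hδrec]
        have key : c * (1 - θ n) * θ n * δ n ≤ c * (1 - θ n) * δ n := by
          nlinarith [mul_nonneg (mul_nonneg hc0 (sq_nonneg (1 - θ n))) hdn]
        nlinarith
  intro s
  induction s with
  | zero => simp
  | succ n ih =>
    obtain ⟨hdn, htn0, hsum⟩ := inv n
    have hθq : θ n ≤ q := by nlinarith
    rw [hδrec]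
    calc θ n * δ n ≤ q * δ n := by nlinarith
      _ ≤ q * (q ^ n * δ 0) := by nlinarith
      _ = q ^ (n + 1) * δ 0 := by ring
end

section
/- Consider n ≥ 2 agents with common stubbornness θ̄(s) ∈ [0,1) on issue s, whose final opinions evolve across issues by y_i(s+1) = (1−θ̄(s))·m + θ̄(s)·y_i(s), where m = (1/n)·Σ_j y_j(0) is the (constant) mean opinion, together with the worst-case stubbornness update θ̄(s+1) = θ̄(s) + c·(1−θ̄(s))·d(s+1), where d(s) = max_{i,j} |y_i(s) − y_j(s)| is the largest distance between any two agents and c ∈ [0,1]. Assume d(0) ≤ 1 and θ̄(0) ∈ [0,1). If c·d(0) + θ̄(0) < 1, then d(s) → 0 as s → ∞ and every y_i(s) converges to the common value m (consensus is achieved). -/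
/-- Worst-case "polarized voters" reduction: `n` agents with common
stubbornness `θ̄(s)` on the complete equal-weight graph, updating
`θ̄(s+1) = θ̄(s) + c(1−θ̄(s))d(s+1)` where `d(s)` is the opinion diameter.
If `c·d(0) + θ̄(0) < 1` then `d(s) → 0` and every opinion converges to the
mean `m`. -/
theorem polarized_voters_consensus
    (n : ℕ) (hn : 2 ≤ n)
    (c : ℝ) (hc : c ∈ Set.Icc (0:ℝ) 1)
    (y : ℕ → Fin n → ℝ) (θbar : ℕ → ℝ) (d : ℕ → ℝ) (m : ℝ)
    (hm : m = (1 / (n:ℝ)) * ∑ j, y 0 j)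
    (hd : ∀ s, d s = ⨆ i, ⨆ j, |y s i - y s j|)
    (hyrec : ∀ s i, y (s+1) i = (1 - θbar s) * m + θbar s * y s i)
    (hθrec : ∀ s, θbar (s+1) = θbar s + c * (1 - θbar s) * d (s+1))
    (hd0 : d 0 ≤ 1) (hθ0 : θbar 0 ∈ Set.Ico (0:ℝ) 1)
    (hcond : c * d 0 + θbar 0 < 1) :
    Filter.Tendsto d Filter.atTop (nhds 0) ∧
    ∀ i, Filter.Tendsto (fun s => y s i) Filter.atTop (nhds m) := by
  obtain ⟨hc0, hc1⟩ := hc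
  obtain ⟨hθ00, hθ01⟩ := hθ0
  set q : ℝ := θbar 0 + c * d 0 with hq
  have hq1 : q < 1 := by linarith
  have i0 : Fin n := ⟨0, by omega⟩
  have hdnn : ∀ s, 0 ≤ d s := by
    intro s
    rw [hd]
    calc (0:ℝ) = |y s i0 - y s i0| := by simp
      _ ≤ ⨆ j, |y s i0 - y s j| :=
        le_ciSup (f := fun j => |y s i0 - y s j|)
          (Set.Finite.bddAbove (Set.finite_range _)) i0
      _ ≤ ⨆ i, ⨆ j, |y s i - y s j| :=
        le_ciSup (Set.Finite.bddAbove (Set.finite_range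
          (fun i => ⨆ j, |y s i - y s j|))) i0
  have hq0 : 0 ≤ q := by
    have := mul_nonneg hc0 (hdnn 0); linarith
  -- diameter recursion, valid when θbar s ≥ 0
  have hdrec : ∀ s, 0 ≤ θbar s → d (s+1) = θbar s * d s := by
    intro s hθ
    have h1 : ∀ i j : Fin n, |y (s+1) i - y (s+1) j| = θbar s * |y s i - y s j| := by
      intro i j
      rw [hyrec, hyrec,
        show (1 - θbar s) * m + θbar s * y s i - ((1 - θbar s) * m + θbar s * y s j)
          = θbar s * (y s i - y s j) from by ring, abs_mul, abs_of_nonneg hθ]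
    rw [hd, hd, Real.mul_iSup_of_nonneg hθ]
    exact iSup_congr fun i => by rw [Real.mul_iSup_of_nonneg hθ]; exact iSup_congr fun j => h1 i j
  -- key invariant
  have key : ∀ s, 0 ≤ θbar s ∧ θbar s + c * d s ≤ q := by
    intro s
    induction s with
    | zero => exact ⟨hθ00, le_refl _⟩
    | succ s ih =>
      obtain ⟨ih0, ih1⟩ := ih
      have hds := hdnn s
      have hcd : 0 ≤ c * d s := mul_nonneg hc0 hds
      have hθlt1 : θbar s < 1 := by linarith
      have hdr := hdrec s ih0
      have hθsucc : θbar (s+1) = θbar s + c * (1 - θbar s) * (θbar s * d s) := by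
        rw [hθrec, hdr]
      constructor
      · rw [hθsucc]
        have h2 : 0 ≤ c * (1 - θbar s) * (θbar s * d s) :=
          mul_nonneg (mul_nonneg hc0 (by linarith)) (mul_nonneg ih0 hds)
        linarith
      · rw [hθsucc, hdr]
        nlinarith [mul_nonneg hcd (sq_nonneg (1 - θbar s))]
  have hθlt1 : ∀ s, θbar s < 1 := fun s => by
    have := (key s).2
    have := (key s).1
    have : 0 ≤ c * d s := mul_nonneg hc0 (hdnn s)
    linarith [(key s).2]
  have hθleq : ∀ s, θbar s ≤ q := fun s => by
    have h1 : 0 ≤ c * d s := mul_nonneg hc0 (hdnn s)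
    linarith [(key s).2]
  -- geometric bound on d
  have hbound : ∀ s, d s ≤ d 0 * q ^ s := by
    intro s
    induction s with
    | zero => simp
    | succ s ih =>
      rw [hdrec s (key s).1, pow_succ]
      calc θbar s * d s ≤ q * d s := by
            have := hdnn s; nlinarith [hθleq s]
        _ ≤ q * (d 0 * q ^ s) := by nlinarith [hdnn s]
        _ = d 0 * (q ^ s * q) := by ring
  have hgeo : Filter.Tendsto (fun s => d 0 * q ^ s) Filter.atTop (nhds 0) := by
    have := (tendsto_pow_atTop_nhds_zero_of_lt_one hq0 hq1).const_mul (d 0)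
    simpa using this
  have hdtend : Filter.Tendsto d Filter.atTop (nhds 0) :=
    squeeze_zero hdnn hbound hgeo
  refine ⟨hdtend, fun i => ?_⟩
  have hyb : ∀ s, |y s i - m| ≤ |y 0 i - m| * q ^ s := by
    intro s
    induction s with
    | zero => simp
    | succ s ih =>
      have : y (s+1) i - m = θbar s * (y s i - m) := by rw [hyrec]; ring
      rw [this, abs_mul, abs_of_nonneg (key s).1, pow_succ]
      calc θbar s * |y s i - m| ≤ q * (|y 0 i - m| * q ^ s) := by
            nlinarith [hθleq s, (key s).1, abs_nonneg (y s i - m), abs_nonneg (y 0 i - m),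
              pow_nonneg hq0 s]
        _ = |y 0 i - m| * (q ^ s * q) := by ring
  have hgeo' : Filter.Tendsto (fun s => |y 0 i - m| * q ^ s) Filter.atTop (nhds 0) := by
    have := (tendsto_pow_atTop_nhds_zero_of_lt_one hq0 hq1).const_mul (|y 0 i - m|)
    simpa using this
  have h0 : Filter.Tendsto (fun s => y s i - m) Filter.atTop (nhds 0) :=
    squeeze_zero_norm (fun s => by simpa using hyb s) hgeo'
  have := h0.add_const m
  simpa using this
end

section
/- Let r < n and for each s ≥ 1 let A(s) be an r×r row-stochastic matrix and B(s) an (n−r)×r row-stochastic matrix. Define V(s) as the n×n block matrix V(s) = [[A(s), 0], [B(s), 0]]. Suppose the left-ordered products A(s)·A(s−1)···A(1) converge to the rank-one matrix 𝟏ᵣ·vᵀ for some v ∈ ℝʳ. Then the products V(s)·V(s−1)···V(1) converge to the rank-one matrix 𝟏ₙ·[vᵀ, 0], i.e., all rows of the limiting product are equal. In particular, for any initial vector y(0), the limit lim_{s→∞} V(s)···V(1)·y(0) lies in span{𝟏ₙ} (consensus). -/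
/-!
The product `V(s)⋯V(1)` keeps the block shape `[[X, 0], [Y, 0]]`, with upper-left block
`A(s)⋯A(1)` and lower-left block `B(s) · A(s-1)⋯A(1)`. The first tends to `𝟏vᵀ` by hypothesis.
For the second, a row-stochastic `B` fixes `𝟏vᵀ` from the left and has ∞-operator norm at
most `1`, so `‖B(s) · A(s-1)⋯A(1) - 𝟏vᵀ‖ ≤ ‖A(s-1)⋯A(1) - 𝟏vᵀ‖ → 0`, whatever the `B(s)` are.
Consensus follows since a matrix whose rows all equal `w` sends `y` to `(w ⬝ᵥ y) • 𝟏`.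
-/

open Filter Topology

namespace Matrix

section Algebra

variable {l m n p R : Type*}

theorem mul_replicateRow_of_rowSum_eq_one [Fintype m] [NonAssocSemiring R] (B : Matrix l m R)
    (hB : ∀ i, ∑ j, B i j = 1) (w : n → R) : B * replicateRow m w = replicateRow l w := by
  ext i j
  simp [mul_apply, replicateRow_apply, ← Finset.sum_mul, hB]

theorem fromBlocks_replicateRow_zero [Zero R] (w : m → R) :
    fromBlocks (replicateRow l w) 0 (replicateRow n w) (0 : Matrix n p R) =
      replicateRow (l ⊕ n) (Sum.elim w 0) := by
  ext (i | i) (j | j) <;> rfl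

theorem fromBlocks_zero_mul_fromBlocks_zero [Fintype m] [Fintype p] [NonUnitalNonAssocSemiring R]
    (A : Matrix l m R) (B : Matrix n m R) (X : Matrix m m R) (Y : Matrix p m R) :
    fromBlocks A 0 B (0 : Matrix n p R) * fromBlocks X 0 Y (0 : Matrix p p R) =
      fromBlocks (A * X) 0 (B * X) 0 := by
  simp [fromBlocks_multiply]

theorem leftProd_succ_eq_fromBlocks [Fintype m] [DecidableEq m] [Fintype p] [DecidableEq p]
    [NonAssocSemiring R] {A : ℕ → Matrix m m R} {B : ℕ → Matrix p m R}
    {PA : ℕ → Matrix m m R} (hPA0 : PA 0 = 1) (hPA : ∀ s, PA (s + 1) = A (s + 1) * PA s)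
    {PV : ℕ → Matrix (m ⊕ p) (m ⊕ p) R} (hPV0 : PV 0 = 1)
    (hPV : ∀ s, PV (s + 1) = fromBlocks (A (s + 1)) 0 (B (s + 1)) 0 * PV s) (s : ℕ) :
    PV (s + 1) = fromBlocks (PA (s + 1)) 0 (B (s + 1) * PA s) 0 := by
  induction s with
  | zero => simp [hPV, hPV0, hPA, hPA0]
  | succ s ih => rw [hPV, ih, fromBlocks_zero_mul_fromBlocks_zero, ← hPA]

end Algebra

section Limits

variable {ι l m n p : Type*} {F : Filter ι}

theorem tendsto_fromBlocks {R : Type*} [TopologicalSpace R]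
    {A : ι → Matrix l n R} {B : ι → Matrix l p R} {C : ι → Matrix m n R} {D : ι → Matrix m p R}
    {A₀ : Matrix l n R} {B₀ : Matrix l p R} {C₀ : Matrix m n R} {D₀ : Matrix m p R}
    (hA : Tendsto A F (𝓝 A₀)) (hB : Tendsto B F (𝓝 B₀))
    (hC : Tendsto C F (𝓝 C₀)) (hD : Tendsto D F (𝓝 D₀)) :
    Tendsto (fun s => fromBlocks (A s) (B s) (C s) (D s)) F (𝓝 (fromBlocks A₀ B₀ C₀ D₀)) := by
  have hcont : Continuous fun x : Matrix l n R × Matrix l p R × Matrix m n R × Matrix m p R =>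
      fromBlocks x.1 x.2.1 x.2.2.1 x.2.2.2 := by
    fun_prop
  exact (hcont.tendsto _).comp (hA.prodMk_nhds (hB.prodMk_nhds (hC.prodMk_nhds hD)))

theorem tendsto_mulVec_of_tendsto_replicateRow [Fintype l] {P : ι → Matrix m l ℝ} {w : l → ℝ}
    (hP : Tendsto P F (𝓝 (replicateRow m w))) (y : l → ℝ) :
    Tendsto (fun s => P s *ᵥ y) F (𝓝 ((w ⬝ᵥ y) • fun _ => 1)) := by
  have hconst : (w ⬝ᵥ y) • (fun _ => 1 : m → ℝ) = replicateRow m w *ᵥ y := by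
    ext
    simp [replicateRow_mulVec_eq_const]
  rw [hconst]
  exact ((continuous_id.matrix_mulVec continuous_const).tendsto _).comp hP

attribute [local instance] Matrix.linftyOpNormedAddCommGroup

theorem linfty_opNorm_le_one_of_rowStochastic [Fintype l] [Fintype m] {B : Matrix l m ℝ}
    (hBnonneg : ∀ i j, 0 ≤ B i j) (hBrow : ∀ i, ∑ j, B i j = 1) : ‖B‖ ≤ 1 := by
  rw [linfty_opNorm_def, NNReal.coe_le_one, Finset.sup_le_iff]
  intro i _
  rw [← NNReal.coe_le_one, NNReal.coe_sum]
  simp [Real.norm_of_nonneg (hBnonneg i _), hBrow i]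

theorem tendsto_rowStochastic_mul_of_tendsto_replicateRow [Fintype l] [Fintype m] [Fintype n]
    {B : ι → Matrix l m ℝ} (hBnonneg : ∀ s i j, 0 ≤ B s i j) (hBrow : ∀ s i, ∑ j, B s i j = 1)
    {P : ι → Matrix m n ℝ} {w : n → ℝ} (hP : Tendsto P F (𝓝 (replicateRow m w))) :
    Tendsto (fun s => B s * P s) F (𝓝 (replicateRow l w)) := by
  -- The ∞-operator norm induces the product topology on matrices, but only up to unfolding,
  -- so `hP` has to be transported explicitly (`E := …`).
  refine tendsto_iff_norm_sub_tendsto_zero.2 <| squeeze_zero (fun _ => norm_nonneg _)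
    (fun s => ?_) ((tendsto_iff_norm_sub_tendsto_zero (E := Matrix m n ℝ)).1 hP)
  calc ‖B s * P s - replicateRow l w‖ = ‖B s * (P s - replicateRow m w)‖ := by
        rw [Matrix.mul_sub, mul_replicateRow_of_rowSum_eq_one _ (hBrow s)]
    _ ≤ ‖B s‖ * ‖P s - replicateRow m w‖ := linfty_opNorm_mul _ _
    _ ≤ ‖P s - replicateRow m w‖ :=
        mul_le_of_le_one_left (norm_nonneg _)
          (linfty_opNorm_le_one_of_rowStochastic (hBnonneg s) (hBrow s))

end Limits

end Matrix

open Matrix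

theorem block_product_consensus_general
    (n r : ℕ)
    (A : ℕ → Matrix (Fin r) (Fin r) ℝ)
    (B : ℕ → Matrix (Fin (n - r)) (Fin r) ℝ)
    (hBpos : ∀ s i j, 0 ≤ B s i j) (hBrow : ∀ s i, ∑ j, B s i j = 1)
    (V : ℕ → Matrix (Fin r ⊕ Fin (n - r)) (Fin r ⊕ Fin (n - r)) ℝ)
    (hV : ∀ s, V s = Matrix.fromBlocks (A s) 0 (B s) 0)
    (PA : ℕ → Matrix (Fin r) (Fin r) ℝ)
    (hPA0 : PA 0 = 1) (hPA : ∀ s, PA (s+1) = A (s+1) * PA s)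
    (PV : ℕ → Matrix (Fin r ⊕ Fin (n - r)) (Fin r ⊕ Fin (n - r)) ℝ)
    (hPV0 : PV 0 = 1) (hPV : ∀ s, PV (s+1) = V (s+1) * PV s)
    (v : Fin r → ℝ)
    (hlim : Filter.Tendsto PA Filter.atTop
      (nhds (Matrix.of fun _ j => v j))) :
    Filter.Tendsto PV Filter.atTop
      (nhds (Matrix.of fun _ j => Sum.elim v (fun _ => (0:ℝ)) j)) ∧
    ∀ y0 : (Fin r ⊕ Fin (n - r)) → ℝ, ∃ α : ℝ,
      Filter.Tendsto (fun s => (PV s) *ᵥ y0) Filter.atTop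
        (nhds (α • fun _ => (1:ℝ))) := by
  have hblocks : ∀ s, PV (s + 1) = fromBlocks (PA (s + 1)) 0 (B (s + 1) * PA s) 0 :=
    leftProd_succ_eq_fromBlocks hPA0 hPA hPV0 fun s => by rw [hPV, hV]
  -- `Matrix.of fun _ j => v j` is `replicateRow _ v` by definition.
  have hlimV : Tendsto PV atTop (𝓝 (replicateRow _ (Sum.elim v 0))) := by
    rw [← tendsto_add_atTop_iff_nat 1, funext hblocks, ← fromBlocks_replicateRow_zero]
    exact tendsto_fromBlocks ((tendsto_add_atTop_iff_nat 1).2 hlim) tendsto_const_nhds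
      (tendsto_rowStochastic_mul_of_tendsto_replicateRow (fun s => hBpos (s + 1))
        (fun s => hBrow (s + 1)) hlim) tendsto_const_nhds
  exact ⟨hlimV, fun y0 => ⟨_, tendsto_mulVec_of_tendsto_replicateRow hlimV y0⟩⟩

/-- Block-triangular consensus: if `V(s) = [[A(s),0],[B(s),0]]` with `A(s)`,
`B(s)` row-stochastic, and the left products `A(s)⋯A(1)` converge to the
rank-one matrix `𝟏ᵣvᵀ`, then `V(s)⋯V(1)` converges to `𝟏ₙ[vᵀ,0]`, and for any
initial vector the product applied to it converges to a consensus vector. -/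
theorem block_product_consensus
    (n r : ℕ) (hr : r < n)
    (A : ℕ → Matrix (Fin r) (Fin r) ℝ)
    (B : ℕ → Matrix (Fin (n - r)) (Fin r) ℝ)
    (hApos : ∀ s i j, 0 ≤ A s i j) (hArow : ∀ s i, ∑ j, A s i j = 1)
    (hBpos : ∀ s i j, 0 ≤ B s i j) (hBrow : ∀ s i, ∑ j, B s i j = 1)
    (V : ℕ → Matrix (Fin r ⊕ Fin (n - r)) (Fin r ⊕ Fin (n - r)) ℝ)
    (hV : ∀ s, V s = Matrix.fromBlocks (A s) 0 (B s) 0)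
    (PA : ℕ → Matrix (Fin r) (Fin r) ℝ)
    (hPA0 : PA 0 = 1) (hPA : ∀ s, PA (s+1) = A (s+1) * PA s)
    (PV : ℕ → Matrix (Fin r ⊕ Fin (n - r)) (Fin r ⊕ Fin (n - r)) ℝ)
    (hPV0 : PV 0 = 1) (hPV : ∀ s, PV (s+1) = V (s+1) * PV s)
    (v : Fin r → ℝ)
    (hlim : Filter.Tendsto PA Filter.atTop
      (nhds (Matrix.of fun _ j => v j))) :
    Filter.Tendsto PV Filter.atTop
      (nhds (Matrix.of fun _ j => Sum.elim v (fun _ => (0:ℝ)) j)) ∧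
    ∀ y0 : (Fin r ⊕ Fin (n - r)) → ℝ, ∃ α : ℝ,
      Filter.Tendsto (fun s => (PV s) *ᵥ y0) Filter.atTop
        (nhds (α • fun _ => (1:ℝ))) :=
  block_product_consensus_general n r A B hBpos hBrow V hV PA hPA0 hPA PV hPV0 hPV v hlim
end

section
/- Let c ∈ [0,1] and consider the full two-agent concatenated Friedkin-Johnsen model with voting feedback: opinions y₁(s), y₂(s) ∈ [0,1] and common stubbornness θ(s) evolve across issues by y_i(s+1) = (1−θ(s))·m + θ(s)·y_i(s) for i = 1,2, where m = (y₁(0)+y₂(0))/2, and θ(s+1) = θ(s) + c·(1−θ(s))·|y₁(s+1) − m| (both agents are at equal distance from m, so their stubbornness values remain equal). Assume θ(0) ∈ [0,1). If c·|y₁(0) − m| + θ(0) < 1, then |y₁(s) − y₂(s)| → 0 as s → ∞, and both opinions converge to the common value m. -/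
/-- Full two-agent concatenated Friedkin-Johnsen model with voting feedback:
opinions contract towards the mean `m` each issue, and stubbornness increases
with the distance to `m`. If `c·|y₁(0) − m| + θ(0) < 1`, consensus is reached:
`|y₁(s) − y₂(s)| → 0` and both opinions converge to `m`. -/
theorem two_agent_concatenated_FJ_consensus
    (c : ℝ) (hc : c ∈ Set.Icc (0:ℝ) 1)
    (y₁ y₂ θ : ℕ → ℝ) (m : ℝ) (hm : m = (y₁ 0 + y₂ 0) / 2)
    (hy₁ : ∀ s, y₁ s ∈ Set.Icc (0:ℝ) 1) (hy₂ : ∀ s, y₂ s ∈ Set.Icc (0:ℝ) 1)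
    (hrec₁ : ∀ s, y₁ (s+1) = (1 - θ s) * m + θ s * y₁ s)
    (hrec₂ : ∀ s, y₂ (s+1) = (1 - θ s) * m + θ s * y₂ s)
    (hθrec : ∀ s, θ (s+1) = θ s + c * (1 - θ s) * |y₁ (s+1) - m|)
    (hθ0 : θ 0 ∈ Set.Ico (0:ℝ) 1)
    (hcond : c * |y₁ 0 - m| + θ 0 < 1) :
    Filter.Tendsto (fun s => |y₁ s - y₂ s|) Filter.atTop (nhds 0) ∧
    Filter.Tendsto y₁ Filter.atTop (nhds m) ∧
    Filter.Tendsto y₂ Filter.atTop (nhds m) := by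
  obtain ⟨hc0, hc1⟩ := hc
  obtain ⟨hθ00, hθ01⟩ := hθ0
  set T : ℝ := c * |y₁ 0 - m| + θ 0 with hT
  set δ : ℕ → ℝ := fun s => |y₁ s - m| with hδ
  -- basic recurrences for the deviation
  have hd1 : ∀ s, y₁ (s+1) - m = θ s * (y₁ s - m) := by
    intro s; rw [hrec₁ s]; ring
  have hd2 : ∀ s, y₂ (s+1) - m = θ s * (y₂ s - m) := by
    intro s; rw [hrec₂ s]; ring
  -- y₂ mirrors y₁
  have hmirror : ∀ s, y₂ s - m = -(y₁ s - m) := by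
    intro s
    induction s with
    | zero => rw [hm]; ring
    | succ n ih => rw [hd1 n, hd2 n, ih]; ring
  -- key invariant: θ0 ≤ θ s and θ s + c * δ s ≤ T
  have key : ∀ s, θ 0 ≤ θ s ∧ θ s + c * δ s ≤ T := by
    intro s
    induction s with
    | zero =>
      refine ⟨le_refl _, ?_⟩
      show θ 0 + c * |y₁ 0 - m| ≤ c * |y₁ 0 - m| + θ 0
      linarith
    | succ n ih =>
      obtain ⟨ih1, ih2⟩ := ih
      have hδn : 0 ≤ δ n := abs_nonneg _
      have hθn0 : 0 ≤ θ n := le_trans hθ00 ih1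
      have hθnT : θ n ≤ T := by nlinarith
      have hθn1 : θ n ≤ 1 := le_trans hθnT (le_of_lt hcond)
      have hδs : δ (n+1) = θ n * δ n := by
        simp only [hδ]
        rw [hd1 n, abs_mul, abs_of_nonneg hθn0]
      have hθs : θ (n+1) = θ n + c * (1 - θ n) * (θ n * δ n) := by
        rw [hθrec n, hd1 n, abs_mul, abs_of_nonneg hθn0]
      constructor
      · rw [hθs]
        have h0 : 0 ≤ c * (1 - θ n) * (θ n * δ n) :=
          mul_nonneg (mul_nonneg hc0 (by linarith)) (mul_nonneg hθn0 hδn)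
        linarith
      · rw [hθs, hδs]
        nlinarith [mul_nonneg (mul_nonneg hc0 hδn) (sq_nonneg (1 - θ n))]
  have hT0 : 0 ≤ T := by
    have := abs_nonneg (y₁ 0 - m)
    nlinarith
  have hT1 : T < 1 := hcond
  -- geometric bound
  have geo : ∀ s, δ s ≤ T ^ s * δ 0 := by
    intro s
    induction s with
    | zero => simp
    | succ n ih =>
      obtain ⟨ih1, ih2⟩ := key n
      have hθn0 : 0 ≤ θ n := le_trans hθ00 ih1
      have hδn : 0 ≤ δ n := abs_nonneg _
      have hθnT : θ n ≤ T := by nlinarith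
      have hδs : δ (n+1) = θ n * δ n := by
        simp only [hδ]
        rw [hd1 n, abs_mul, abs_of_nonneg hθn0]
      calc δ (n+1) = θ n * δ n := hδs
        _ ≤ T * (T ^ n * δ 0) := by
            apply mul_le_mul hθnT ih hδn hT0
        _ = T ^ (n+1) * δ 0 := by ring
  -- the geometric sequence tends to 0
  have hgeo0 : Filter.Tendsto (fun s => T ^ s * δ 0) Filter.atTop (nhds 0) := by
    have := (tendsto_pow_atTop_nhds_zero_of_lt_one hT0 hT1).mul_const (δ 0)
    simpa using this
  have hδ0 : Filter.Tendsto δ Filter.atTop (nhds 0) :=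
    squeeze_zero (fun s => abs_nonneg _) geo hgeo0
  have hy₁m : Filter.Tendsto y₁ Filter.atTop (nhds m) := by
    rw [tendsto_iff_dist_tendsto_zero]
    simpa [Real.dist_eq] using hδ0
  have hy₂m : Filter.Tendsto y₂ Filter.atTop (nhds m) := by
    rw [tendsto_iff_dist_tendsto_zero]
    have : (fun s => dist (y₂ s) m) = δ := by
      funext s
      simp only [Real.dist_eq, hδ]
      rw [hmirror s, abs_neg]
    rw [this]; exact hδ0
  refine ⟨?_, hy₁m, hy₂m⟩
  have : (fun s => |y₁ s - y₂ s|) = fun s => 2 * δ s := by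
    funext s
    have : y₁ s - y₂ s = 2 * (y₁ s - m) := by
      have := hmirror s; linarith
    rw [this]
    simp only [hδ, abs_mul]
    norm_num
  rw [this]
  simpa using hδ0.const_mul 2
end
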